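/- arXiv:math/0302068 — 2 statements merged into one kernel-verified Lean document; each statement's English description precedes it below -/
import Mathlib

section
/- Let G be a finite subgroup of SL(2,ℂ) with irreducible complex representations R_0,...,R_r (R_0 trivial), and let Q be the 2-dimensional representation from the inclusion G ⊂ SL(2,ℂ). Define the matrix A by R_i ⊗ Q ≅ ⊕_j a_{ij} R_j. Then A is symmetric, i.e. a_{ij} = a_{ji} for all i,j. -/
/-!
For `g ∈ G` we have `g ^ |G| = 1`, so an eigenvalue `μ` of `g` is a root of unity and
`conj μ = μ⁻¹`. Since `det g = 1`, the characteristic polynomial `X² - tr g · X + 1` shows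
`tr g = μ + μ⁻¹`, which is therefore real. Conjugating the character formula for `a j i` and
using that `tr g` is real gives the formula for `a i j`.
-/

open ComplexConjugate
open scoped MatrixGroups

theorem spectrum.exists_pow_eq_one_of_pow_eq_one {𝕜 A : Type*} [Field 𝕜] [IsAlgClosed 𝕜]
    [Ring A] [Nontrivial A] [Algebra 𝕜 A] [FiniteDimensional 𝕜 A] {a : A} {n : ℕ}
    (h : a ^ n = 1) : ∃ μ ∈ spectrum 𝕜 a, μ ^ n = 1 := by
  obtain ⟨μ, hμ⟩ := spectrum.nonempty_of_isAlgClosed_of_finiteDimensional 𝕜 a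
  refine ⟨μ, hμ, ?_⟩
  simpa [h, spectrum.one_eq] using spectrum.pow_mem_pow a n hμ

theorem Matrix.trace_fin_two_eq_add_inv_of_mem_spectrum {K : Type*} [Field K]
    {M : Matrix (Fin 2) (Fin 2) K} (hdet : M.det = 1) {μ : K} (hμ : μ ∈ spectrum K M) :
    M.trace = μ + μ⁻¹ := by
  rw [Matrix.mem_spectrum_iff_isRoot_charpoly, Matrix.charpoly_fin_two, hdet] at hμ
  have hquad : μ ^ 2 - M.trace * μ + 1 = 0 := by simpa using hμ
  have hμ0 : μ ≠ 0 := by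
    rintro rfl
    simp at hquad
  field_simp
  linear_combination -hquad

theorem Complex.conj_add_inv_of_norm_eq_one {μ : ℂ} (hμ : ‖μ‖ = 1) :
    conj (μ + μ⁻¹) = μ + μ⁻¹ := by
  rw [map_add, map_inv₀, ← Complex.inv_eq_conj hμ, inv_inv, add_comm]

theorem Matrix.SpecialLinearGroup.conj_trace_of_isOfFinOrder {g : SL(2, ℂ)}
    (hg : IsOfFinOrder g) :
    conj (g : Matrix (Fin 2) (Fin 2) ℂ).trace = (g : Matrix (Fin 2) (Fin 2) ℂ).trace := by
  obtain ⟨n, hn, hgn⟩ := isOfFinOrder_iff_pow_eq_one.mp hg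
  have hgn' : (g : Matrix (Fin 2) (Fin 2) ℂ) ^ n = 1 := by
    rw [← Matrix.SpecialLinearGroup.coe_pow, hgn, Matrix.SpecialLinearGroup.coe_one]
  obtain ⟨μ, hμ, hμn⟩ := spectrum.exists_pow_eq_one_of_pow_eq_one (𝕜 := ℂ) hgn'
  rw [Matrix.trace_fin_two_eq_add_inv_of_mem_spectrum g.det_coe hμ]
  exact Complex.conj_add_inv_of_norm_eq_one (Complex.norm_eq_one_of_pow_eq_one hμn hn.ne')

theorem adjacency_matrix_symm_general
    (G : Subgroup (Matrix.SpecialLinearGroup (Fin 2) ℂ)) [Fintype G]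
    (r : ℕ) (χ : Fin (r + 1) → G → ℂ)
    (a : Fin (r + 1) → Fin (r + 1) → ℕ)
    (ha : ∀ i j, (a i j : ℂ) = (Fintype.card G : ℂ)⁻¹ *
      ∑ g : G,
        Matrix.trace ((g : Matrix.SpecialLinearGroup (Fin 2) ℂ) : Matrix (Fin 2) (Fin 2) ℂ)
          * χ i g * (starRingEnd ℂ) (χ j g)) :
    ∀ i j, a i j = a j i := by
  intro i j
  have htrace (g : G) : conj ((g : SL(2, ℂ)) : Matrix (Fin 2) (Fin 2) ℂ).trace =
      ((g : SL(2, ℂ)) : Matrix (Fin 2) (Fin 2) ℂ).trace :=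
    Matrix.SpecialLinearGroup.conj_trace_of_isOfFinOrder
      (Submonoid.isOfFinOrder_coe.mpr (isOfFinOrder_of_finite g))
  have key : (a i j : ℂ) = conj (a j i : ℂ) := by
    simp only [ha, map_mul, map_inv₀, map_natCast, map_sum, htrace, Complex.conj_conj]
    congr 1
    exact Finset.sum_congr rfl fun g _ ↦ by ring
  exact_mod_cast key.trans (Complex.conj_natCast _)

/-- McKay adjacency matrix of a finite subgroup of `SL(2, ℂ)` is symmetric.
The multiplicities `a i j` of `R_j` in `R_i ⊗ Q` are given by the character
inner-product formula. -/
theorem adjacency_matrix_symm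
    (G : Subgroup (Matrix.SpecialLinearGroup (Fin 2) ℂ)) [Fintype G]
    (r : ℕ) (χ : Fin (r + 1) → G → ℂ)
    (htriv : ∀ g : G, χ 0 g = 1)
    (a : Fin (r + 1) → Fin (r + 1) → ℕ)
    (ha : ∀ i j, (a i j : ℂ) = (Fintype.card G : ℂ)⁻¹ *
      ∑ g : G,
        Matrix.trace ((g : Matrix.SpecialLinearGroup (Fin 2) ℂ) : Matrix (Fin 2) (Fin 2) ℂ)
          * χ i g * (starRingEnd ℂ) (χ j g)) :
    ∀ i j, a i j = a j i :=
  adjacency_matrix_symm_general G r χ a ha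
end

section
/- Let G ⊂ SL(3,ℂ) be a finite group acting freely on ℂ³∖{0}, and let C be the r×r Cartan matrix obtained from the extended Cartan matrix C̃ = [a_{ij} − b_{ij}]_{i,j=0..r} by deleting the row and column of the trivial representation. Then C is invertible. -/
open scoped BigOperators Classical

noncomputable def chiQ (g : Matrix.SpecialLinearGroup (Fin 3) ℂ) : ℂ :=
  Matrix.trace ((g : Matrix (Fin 3) (Fin 3) ℂ))

noncomputable def chiL2 (g : Matrix.SpecialLinearGroup (Fin 3) ℂ) : ℂ :=
  ((Matrix.trace ((g : Matrix (Fin 3) (Fin 3) ℂ)))^2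
    - Matrix.trace ((g : Matrix (Fin 3) (Fin 3) ℂ) * (g : Matrix (Fin 3) (Fin 3) ℂ))) / 2

/-- Newton-type identity for 3×3 matrices. -/
lemma chi_det_identity (A : Matrix (Fin 3) (Fin 3) ℂ) :
    Matrix.trace A - ((Matrix.trace A)^2 - Matrix.trace (A*A))/2
      = 1 - A.det - (1 - A).det := by
  simp [Matrix.det_fin_three, Matrix.trace_fin_three, Matrix.mul_apply,
    Fin.sum_univ_three, Matrix.one_apply, Matrix.sub_apply]
  ring

/-- For `g ∈ SL(3,ℂ)`, `χ_Q(g) - χ_{Λ²Q}(g) = -det(1 - g)`. -/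
lemma chi_sub_eq (g : Matrix.SpecialLinearGroup (Fin 3) ℂ) :
    chiQ g - chiL2 g = -((1 : Matrix (Fin 3) (Fin 3) ℂ) - (g : Matrix (Fin 3) (Fin 3) ℂ)).det := by
  have := chi_det_identity (g : Matrix (Fin 3) (Fin 3) ℂ)
  rw [g.det_coe] at this
  unfold chiQ chiL2
  rw [this]; ring

/-- For a finite `G ⊂ SL(3, ℂ)` acting freely on `ℂ³ ∖ {0}`, the Cartan matrix `C`,
obtained from the extended Cartan matrix `c̃ = [a_{ij} - b_{ij}]` (defined at the
character level by `(χ_Q - χ_{Λ²Q}) χ_i = Σ_j c_{ij} χ_j`) by deleting the row and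
column of the trivial representation, is invertible. -/
theorem cartan_matrix_invertible
    (G : Subgroup (Matrix.SpecialLinearGroup (Fin 3) ℂ)) [Fintype G]
    (hfree : ∀ g : G, ∀ v : Fin 3 → ℂ, v ≠ 0 →
      Matrix.mulVec ((g : Matrix.SpecialLinearGroup (Fin 3) ℂ) : Matrix (Fin 3) (Fin 3) ℂ) v = v →
      g = 1)
    (r : ℕ) (χ : Fin (r + 1) → G → ℂ) (d : Fin (r + 1) → ℕ)
    (htriv : ∀ g : G, χ 0 g = 1)
    (hdim : ∀ i, χ i 1 = (d i : ℂ))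
    (horth : ∀ i k, ∑ g : G, χ i g * (starRingEnd ℂ) (χ k g)
      = if i = k then (Fintype.card G : ℂ) else 0)
    (hclass : ∀ i, ∀ g h : G, χ i (h * g * h⁻¹) = χ i g)
    (hspan : ∀ f : G → ℂ, (∀ g h : G, f (h * g * h⁻¹) = f g) →
      ∃ coef : Fin (r + 1) → ℂ, ∀ g : G, f g = ∑ i, coef i * χ i g)
    (c : Fin (r + 1) → Fin (r + 1) → ℤ)
    (hc : ∀ i, ∀ g : G,
      (chiQ (g : Matrix.SpecialLinearGroup (Fin 3) ℂ)
        - chiL2 (g : Matrix.SpecialLinearGroup (Fin 3) ℂ)) * χ i g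
      = ∑ j, (c i j : ℂ) * χ j g) :
    (Matrix.of fun i j : Fin r => (c i.succ j.succ : ℂ)).det ≠ 0 := by
  set φ : G → ℂ := fun g =>
    chiQ (g : Matrix.SpecialLinearGroup (Fin 3) ℂ)
      - chiL2 (g : Matrix.SpecialLinearGroup (Fin 3) ℂ) with hφdef
  set n : ℂ := (Fintype.card G : ℂ) with hndef
  have hn : n ≠ 0 := Nat.cast_ne_zero.mpr Fintype.card_ne_zero
  -- φ vanishes only at the identity
  have hφ1 : φ 1 = 0 := by
    have : ((1 : G) : Matrix.SpecialLinearGroup (Fin 3) ℂ) = 1 := rfl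
    simp [hφdef, this, chiQ, chiL2, Matrix.SpecialLinearGroup.coe_one, Matrix.trace_one]
    norm_num
  have hφne : ∀ g : G, g ≠ 1 → φ g ≠ 0 := by
    intro g hg h0
    have hdet : ((1 : Matrix (Fin 3) (Fin 3) ℂ)
        - ((g : Matrix.SpecialLinearGroup (Fin 3) ℂ) : Matrix (Fin 3) (Fin 3) ℂ)).det = 0 := by
      have := chi_sub_eq (g : Matrix.SpecialLinearGroup (Fin 3) ℂ)
      rw [hφdef] at h0
      simp only [h0] at this
      linear_combination this
    obtain ⟨v, hv, hv0⟩ := Matrix.exists_mulVec_eq_zero_iff.mpr hdet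
    apply hg
    apply hfree g v hv
    have : Matrix.mulVec (1 : Matrix (Fin 3) (Fin 3) ℂ) v
        - Matrix.mulVec ((g : Matrix.SpecialLinearGroup (Fin 3) ℂ) : Matrix (Fin 3) (Fin 3) ℂ) v
        = 0 := by rw [← Matrix.sub_mulVec]; exact hv0
    have h1 := sub_eq_zero.mp this
    rw [Matrix.one_mulVec] at h1
    exact h1.symm
  -- the pairing computation
  have pair : ∀ (y : Fin (r+1) → ℂ) (k : Fin (r+1)),
      ∑ g : G, (∑ i, y i * χ i g) * (starRingEnd ℂ) (χ k g) = y k * n := by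
    intro y k
    calc ∑ g : G, (∑ i, y i * χ i g) * (starRingEnd ℂ) (χ k g)
        = ∑ g : G, ∑ i, y i * (χ i g * (starRingEnd ℂ) (χ k g)) := by
          refine Finset.sum_congr rfl fun g _ => ?_
          rw [Finset.sum_mul]
          exact Finset.sum_congr rfl fun i _ => mul_assoc _ _ _
      _ = ∑ i, y i * ∑ g : G, χ i g * (starRingEnd ℂ) (χ k g) := by
          rw [Finset.sum_comm]
          exact Finset.sum_congr rfl fun i _ => (Finset.mul_sum _ _ _).symm
      _ = y k * n := by simp_rw [horth]; simp [hndef]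
  -- linear independence of characters
  have hindep : ∀ b : Fin (r+1) → ℂ, (∀ g : G, ∑ i, b i * χ i g = 0) → ∀ k, b k = 0 := by
    intro b hb k
    have h2 : b k * n = 0 := by
      rw [← pair b k]
      refine Finset.sum_eq_zero fun g _ => ?_
      rw [hb g, zero_mul]
    exact (mul_eq_zero.mp h2).resolve_right hn
  -- φ expressed in characters
  have hφχ : ∀ g : G, φ g = ∑ j, (c 0 j : ℂ) * χ j g := by
    intro g
    rw [← hc 0 g, htriv, mul_one]
  -- the delta function at 1
  obtain ⟨coef, hcoef⟩ := hspan (fun g => if g = 1 then 1 else 0) (by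
    intro g h
    by_cases hg : g = 1
    · subst hg; simp
    · have : h * g * h⁻¹ ≠ 1 := by
        intro hh
        apply hg
        have := congrArg (fun z => h⁻¹ * z * h) hh
        simpa [mul_assoc] using this
      simp [hg, this])
  have hcoefval : ∀ k, coef k * n = (d k : ℂ) := by
    intro k
    have h1 : ∑ g : G, (if g = (1:G) then (1:ℂ) else 0) * (starRingEnd ℂ) (χ k g)
        = (d k : ℂ) := by
      rw [Fintype.sum_eq_single (1 : G) (fun g hg => by simp [hg])]
      simp [hdim k, Complex.conj_natCast]
    rw [← pair coef k, ← h1]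
    exact Finset.sum_congr rfl fun g _ => by rw [← hcoef g]
  -- the dimension vector is a left null vector of c
  have hleft : ∀ j, ∑ i, (d i : ℂ) * (c i j : ℂ) = 0 := by
    intro j
    have hb : ∀ g : G, ∑ j', (∑ i, coef i * (c i j' : ℂ)) * χ j' g = 0 := by
      intro g
      have key : ∑ j', (∑ i, coef i * (c i j' : ℂ)) * χ j' g
          = φ g * (if g = 1 then 1 else 0) := by
        calc ∑ j', (∑ i, coef i * (c i j' : ℂ)) * χ j' g
            = ∑ j', ∑ i, coef i * ((c i j' : ℂ) * χ j' g) := by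
              refine Finset.sum_congr rfl fun j' _ => ?_
              rw [Finset.sum_mul]
              exact Finset.sum_congr rfl fun i _ => mul_assoc _ _ _
          _ = ∑ i, coef i * ∑ j', (c i j' : ℂ) * χ j' g := by
              rw [Finset.sum_comm]
              exact Finset.sum_congr rfl fun i _ => (Finset.mul_sum _ _ _).symm
          _ = ∑ i, coef i * (φ g * χ i g) := by
              refine Finset.sum_congr rfl fun i _ => ?_
              rw [← hc i g]
          _ = φ g * ∑ i, coef i * χ i g := by
              rw [Finset.mul_sum]
              exact Finset.sum_congr rfl fun i _ => by ring
          _ = φ g * (if g = 1 then 1 else 0) := by rw [← hcoef g]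
      rw [key]
      by_cases hg : g = 1
      · subst hg; rw [hφ1, zero_mul]
      · simp [hg]
    have hz := hindep _ hb
    calc ∑ i, (d i : ℂ) * (c i j : ℂ)
        = n * ∑ i, coef i * (c i j : ℂ) := by
          rw [Finset.mul_sum]
          exact Finset.sum_congr rfl fun i _ => by rw [← hcoefval i]; ring
      _ = 0 := by rw [hz j, mul_zero]
  -- the dimension vector spans the right kernel of c
  have hright : ∀ x : Fin (r+1) → ℂ, (∀ i, ∑ j, (c i j : ℂ) * x j = 0) →
      x 0 = 0 → ∀ k, x k = 0 := by
    intro x hx hx0 k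
    set w : G → ℂ := fun g => ∑ j, (starRingEnd ℂ) (χ j g) * x j with hwdef
    -- ∑_g χ i g * (φ g * w g) = 0 for all i
    have claim1 : ∀ i, ∑ g : G, χ i g * (φ g * w g) = 0 := by
      intro i
      have : ∀ g : G, χ i g * (φ g * w g)
          = ∑ j, x j * ((∑ k', (c i k' : ℂ) * χ k' g) * (starRingEnd ℂ) (χ j g)) := by
        intro g
        have hcg : φ g * χ i g = ∑ k', (c i k' : ℂ) * χ k' g := hc i g
        calc χ i g * (φ g * w g) = (φ g * χ i g) * w g := by ring
          _ = (∑ k', (c i k' : ℂ) * χ k' g) * w g := by rw [hcg]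
          _ = ∑ j, x j * ((∑ k', (c i k' : ℂ) * χ k' g) * (starRingEnd ℂ) (χ j g)) := by
              rw [hwdef]
              rw [Finset.mul_sum]
              exact Finset.sum_congr rfl fun j _ => by ring
      simp_rw [this]
      rw [Finset.sum_comm]
      have inner : ∀ j, ∑ g : G, x j * ((∑ k', (c i k' : ℂ) * χ k' g) * (starRingEnd ℂ) (χ j g))
          = x j * ((c i j : ℂ) * n) := by
        intro j
        rw [← Finset.mul_sum, pair (fun k' => (c i k' : ℂ)) j]
      simp_rw [inner]
      have : ∑ j, x j * ((c i j : ℂ) * n) = n * ∑ j, (c i j : ℂ) * x j := by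
        rw [Finset.mul_sum]
        exact Finset.sum_congr rfl fun j _ => by ring
      rw [this, hx i, mul_zero]
    -- φ g * w g = 0 for all g
    have claim2 : ∀ g : G, φ g * w g = 0 := by
      set u : G → ℂ := fun g => φ g * w g with hudef
      have hu_class : ∀ g h : G, (starRingEnd ℂ) (u (h * g * h⁻¹)) = (starRingEnd ℂ) (u g) := by
        intro g h
        have hφc : φ (h * g * h⁻¹) = φ g := by
          rw [hφχ, hφχ]
          exact Finset.sum_congr rfl fun j _ => by rw [hclass j g h]
        have hwc : w (h * g * h⁻¹) = w g := by
          rw [hwdef]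
          exact Finset.sum_congr rfl fun j _ => by rw [hclass j g h]
        rw [hudef]; simp only []
        rw [hφc, hwc]
      obtain ⟨a, ha⟩ := hspan (fun g => (starRingEnd ℂ) (u g)) hu_class
      have husum : ∑ g : G, u g * (starRingEnd ℂ) (u g) = 0 := by
        calc ∑ g : G, u g * (starRingEnd ℂ) (u g)
            = ∑ g : G, ∑ i, a i * (χ i g * u g) := by
              refine Finset.sum_congr rfl fun g _ => ?_
              rw [ha g, Finset.mul_sum]
              exact Finset.sum_congr rfl fun i _ => by ring
          _ = ∑ i, a i * ∑ g : G, χ i g * u g := by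
              rw [Finset.sum_comm]
              exact Finset.sum_congr rfl fun i _ => (Finset.mul_sum _ _ _).symm
          _ = 0 := by
              refine Finset.sum_eq_zero fun i _ => ?_
              rw [claim1 i, mul_zero]
      have hnormsum : ∑ g : G, (Complex.normSq (u g) : ℝ) = 0 := by
        have : ((∑ g : G, (Complex.normSq (u g) : ℝ) : ℝ) : ℂ) = 0 := by
          push_cast
          rw [← husum]
          exact Finset.sum_congr rfl fun g _ => (Complex.mul_conj (u g)).symm
        exact_mod_cast this
      intro g
      have := (Finset.sum_eq_zero_iff_of_nonneg
        (fun g _ => Complex.normSq_nonneg (u g))).mp hnormsum g (Finset.mem_univ g)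
      exact Complex.normSq_eq_zero.mp this
    -- hence w vanishes away from 1
    have hwzero : ∀ g : G, g ≠ 1 → w g = 0 := by
      intro g hg
      rcases mul_eq_zero.mp (claim2 g) with h | h
      · exact absurd h (hφne g hg)
      · exact h
    -- recover x from w
    have hrec : ∀ k, x k * n = (d k : ℂ) * w 1 := by
      intro k
      have h1 : ∑ g : G, χ k g * w g = x k * n := by
        have : ∀ g : G, χ k g * w g = ∑ j, x j * (χ k g * (starRingEnd ℂ) (χ j g)) := by
          intro g
          rw [hwdef]; simp only []
          rw [Finset.mul_sum]
          exact Finset.sum_congr rfl fun j _ => by ring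
        simp_rw [this]
        rw [Finset.sum_comm]
        have inner : ∀ j, ∑ g : G, x j * (χ k g * (starRingEnd ℂ) (χ j g))
            = x j * (if k = j then n else 0) := by
          intro j
          rw [← Finset.mul_sum, horth k j]
        simp_rw [inner]
        simp
      have h2 : ∑ g : G, χ k g * w g = χ k 1 * w 1 := by
        rw [Fintype.sum_eq_single (1 : G) (fun g hg => by rw [hwzero g hg, mul_zero])]
      rw [← h1, h2, hdim k]
    have hw1 : w 1 = 0 := by
      have h0 := hrec 0
      rw [hx0, zero_mul] at h0
      have hd0 : (d 0 : ℂ) = 1 := by rw [← hdim 0, htriv 1]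
      rw [hd0, one_mul] at h0
      exact h0.symm
    have := hrec k
    rw [hw1, mul_zero] at this
    exact (mul_eq_zero.mp this).resolve_right hn
  -- now the main argument
  intro hdet
  obtain ⟨v, hv, hv0⟩ := Matrix.exists_mulVec_eq_zero_iff.mpr hdet
  set x : Fin (r+1) → ℂ := Fin.cases 0 v with hxdef
  have hx0 : x 0 = 0 := rfl
  have hxsucc : ∀ j : Fin r, x j.succ = v j := fun j => rfl
  have hrows : ∀ i : Fin r, ∑ j, (c i.succ j : ℂ) * x j = 0 := by
    intro i
    have := congrFun hv0 i
    simp only [Matrix.mulVec, dotProduct, Matrix.of_apply] at this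
    rw [Fin.sum_univ_succ]
    simp only [hx0, mul_zero, zero_add]
    calc ∑ j : Fin r, (c i.succ j.succ : ℂ) * x j.succ
        = ∑ j : Fin r, (c i.succ j.succ : ℂ) * v j := by
          exact Finset.sum_congr rfl fun j _ => by rw [hxsucc j]
      _ = 0 := this
  have hrow0 : ∑ j, (c 0 j : ℂ) * x j = 0 := by
    have hsum : ∑ i, (d i : ℂ) * ∑ j, (c i j : ℂ) * x j = 0 := by
      have swap : ∑ i, (d i : ℂ) * ∑ j, (c i j : ℂ) * x j
          = ∑ j, (∑ i, (d i : ℂ) * (c i j : ℂ)) * x j := by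
        simp_rw [Finset.mul_sum, Finset.sum_mul]
        rw [Finset.sum_comm]
        refine Finset.sum_congr rfl fun j _ => Finset.sum_congr rfl fun i _ => by ring
      rw [swap]
      refine Finset.sum_eq_zero fun j _ => ?_
      rw [hleft j, zero_mul]
    rw [Fin.sum_univ_succ] at hsum
    have hrest : ∑ i : Fin r, (d i.succ : ℂ) * ∑ j, (c i.succ j : ℂ) * x j = 0 := by
      refine Finset.sum_eq_zero fun i _ => ?_
      rw [hrows i, mul_zero]
    rw [hrest, add_zero] at hsum
    have hd0 : (d 0 : ℂ) = 1 := by rw [← hdim 0, htriv 1]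
    rw [hd0, one_mul] at hsum
    exact hsum
  have hall : ∀ i, ∑ j, (c i j : ℂ) * x j = 0 := by
    intro i
    refine Fin.cases ?_ ?_ i
    · exact hrow0
    · exact hrows
  have hxzero := hright x hall hx0
  apply hv
  funext j
  exact hxzero j.succ
end
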